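/- Let K be a connection on TE → E, g a pseudo-Riemannian metric, I = ẋ^λ ∂̇_λ the Liouville vector field on TE, and g^♭ = g_{λμ} ẋ^λ d^μ. Then L[I] L[K] g^♭ = ẋ^ρ (∂_λ g_{ρμ} + g_{σμ} ∂̇_ρ K_λ^σ) d^λ ∧ d^μ; hence L[I] L[K] g^♭ = 0 if and only if ∂_ν g_{λμ} + g_{ρμ} ∂̇_λ K_ν^ρ − ∂_μ g_{λν} − g_{ρν} ∂̇_λ K_μ^ρ = 0 for all indices. -/

import Mathlib

open scoped BigOperators

/-- Base coordinates of a chart of the manifold `E`. -/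
abbrev Base (n : ℕ) := Fin n → ℝ

/-- Induced coordinates `(x, ẋ)` on the tangent bundle `TE`;
also used for tangent vectors of `TE` (horizontal and vertical components). -/
abbrev TE (n : ℕ) := (Fin n → ℝ) × (Fin n → ℝ)

/-- Partial derivative `∂_i` on the base. -/
noncomputable def pdB {n : ℕ} (f : Base n → ℝ) (i : Fin n) (x : Base n) : ℝ :=
  fderiv ℝ f x (Pi.single i 1)

/-- Partial derivative `∂_i` on `TE`. -/
noncomputable def pdT {n : ℕ} (f : TE n → ℝ) (i : Fin n) (p : TE n) : ℝ :=
  fderiv ℝ f p (Pi.single i 1, 0)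

/-- Fibre partial derivative `∂̇_i` on `TE`. -/
noncomputable def vdT {n : ℕ} (f : TE n → ℝ) (i : Fin n) (p : TE n) : ℝ :=
  fderiv ℝ f p (0, Pi.single i 1)

/-- An `r`-form on `TE`, given by its value on `r`-tuples of (constant-coefficient)
tangent vectors of `TE` at each point. -/
def Form (n r : ℕ) := TE n → (Fin r → TE n) → ℝ

/-- Exterior differential in coordinates. -/
noncomputable def extd {n r : ℕ} (f : Form n r) : Form n (r+1) :=
  fun p v => ∑ i : Fin (r+1),
    (-1 : ℝ) ^ (i : ℕ) * fderiv ℝ (fun q => f q (v ∘ i.succAbove)) p (v i)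

/-- Insertion operator `i(K)` of a tangent-valued 1-form `Kv` (given as a map sending a
tangent vector of `TE` to a tangent vector of `TE`, pointwise) on forms. -/
noncomputable def insK {n : ℕ} (Kv : TE n → TE n → TE n) :
    {r : ℕ} → Form n r → Form n r
  | 0, _ => fun _ _ => 0
  | (r+1), f => fun p v =>
      ∑ j : Fin (r+1), (-1 : ℝ) ^ (j : ℕ) * f p (Fin.cons (Kv p (v j)) (v ∘ j.succAbove))

/-- The Frölicher–Nijenhuis Lie derivative `L[K] = i(K)∘d − d∘i(K)` of forms along a
tangent-valued 1-form. -/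
noncomputable def lieK {n r : ℕ} (Kv : TE n → TE n → TE n) (f : Form n r) :
    Form n (r+1) :=
  fun p v => insK Kv (extd f) p v - extd (insK Kv f) p v

/-- The tangent-valued 1-form `K = dˡ ⊗ (∂_l + K_l^m ∂̇_m)` associated with a
(possibly nonlinear) connection with Christoffel symbols `K : TE n → Fin n → Fin n → ℝ`. -/
noncomputable def horK {n : ℕ} (K : TE n → Fin n → Fin n → ℝ) : TE n → TE n → TE n :=
  fun p w => (w.1, fun b => ∑ a, w.1 a * K p a b)

/-- The Christoffel symbols `K_a^b = Γ_a^b{}_c(x) ẋ^c` of a linear connection. -/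
noncomputable def linK {n : ℕ} (G : Base n → Fin n → Fin n → Fin n → ℝ) :
    TE n → Fin n → Fin n → ℝ :=
  fun p a b => ∑ c, G p.1 a b c * p.2 c

/-- The 1-form `g♭ = g_{ab} ẋ^a d^b` on `TE`. -/
noncomputable def gflat {n : ℕ} (g : Base n → Fin n → Fin n → ℝ) : Form n 1 :=
  fun p v => ∑ a, ∑ b, g p.1 a b * p.2 a * (v 0).1 b

/-- Ordinary Lie derivative of a form on `TE` along a vector field `W` on `TE`. -/
noncomputable def lieV {n r : ℕ} (W : TE n → TE n) (f : Form n r) : Form n r :=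
  fun p v => fderiv ℝ (fun q => f q v) p (W p)
    + ∑ i, f p (Function.update v i (fderiv ℝ W p (v i)))

/-- The Liouville vector field `I = ẋ^a ∂̇_a` on `TE`. -/
def liou {n : ℕ} : TE n → TE n := fun p => (0, p.2)

/-- The linear horizontal `r`-form `φ = c_{e l₁…l_r}(x) ẋ^e d^{l₁}∧…∧d^{l_r}` on `TE`
with coefficients `c`. -/
noncomputable def linHorForm {n r : ℕ} (c : Base n → Fin n → (Fin r → Fin n) → ℝ) :
    Form n r :=
  fun p v => ∑ e, ∑ l : Fin r → Fin n,
    c p.1 e l * p.2 e * Matrix.det (Matrix.of fun i j => (v i).1 (l j))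

section Aux
variable {n : ℕ}

/-- Linearity: expand a continuous linear functional on `Fin n → ℝ` over the basis. -/
lemma clm_pi_expand (L : (Fin n → ℝ) →L[ℝ] ℝ) (u : Fin n → ℝ) :
    L u = ∑ c, u c * L (Pi.single c 1) := by
  have hu : u = ∑ c, u c • (Pi.single c (1:ℝ) : Fin n → ℝ) := by
    funext j
    simp [Pi.single_apply, Finset.sum_ite_eq']
  conv_lhs => rw [hu]
  rw [map_sum]
  simp [smul_eq_mul]

lemma fderiv_base_expand {G : Base n → ℝ} (x : Base n) (u : Fin n → ℝ) :
    fderiv ℝ G x u = ∑ c, u c * pdB G c x := by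
  simpa [pdB] using clm_pi_expand (fderiv ℝ G x) u

lemma clm_fiber_expand (L : TE n →L[ℝ] ℝ) (y : Fin n → ℝ) :
    L ((0 : Fin n → ℝ), y) = ∑ c, y c * L (0, Pi.single c 1) := by
  have hu : (((0 : Fin n → ℝ), y) : TE n)
      = ∑ c, y c • ((0, Pi.single c (1:ℝ)) : TE n) := by
    ext j
    · simp [Prod.fst_sum]
    · simp [Prod.snd_sum, Pi.single_apply, Finset.sum_ite_eq']
  conv_lhs => rw [hu]
  rw [map_sum]
  refine Finset.sum_congr rfl fun c _ => ?_
  rw [map_smul, smul_eq_mul]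

lemma fderiv_fiber_expand (F : TE n → ℝ) (p : TE n) (y : Fin n → ℝ) :
    fderiv ℝ F p ((0 : Fin n → ℝ), y) = ∑ c, y c * vdT F c p := by
  simpa [vdT] using clm_fiber_expand (fderiv ℝ F p) y

end Aux
section Aux2
variable {n : ℕ}

lemma diffAt_comp_fst {G : Base n → ℝ} (hG : Differentiable ℝ G) (p : TE n) :
    DifferentiableAt ℝ (fun q : TE n => G q.1) p :=
  (hG p.1).comp p differentiableAt_fst

lemma fderiv_comp_fst_apply {G : Base n → ℝ} (hG : Differentiable ℝ G) (p u : TE n) :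
    fderiv ℝ (fun q : TE n => G q.1) p u = fderiv ℝ G p.1 u.1 := by
  have h : HasFDerivAt (fun q : TE n => G q.1)
      ((fderiv ℝ G p.1).comp (ContinuousLinearMap.fst ℝ (Fin n → ℝ) (Fin n → ℝ))) p :=
    ((hG p.1).hasFDerivAt.comp p hasFDerivAt_fst)
  rw [h.fderiv]; rfl

lemma hasFDeriv_snd_apply (a : Fin n) (p : TE n) :
    HasFDerivAt (fun q : TE n => q.2 a)
      (((ContinuousLinearMap.proj a).comp
        (ContinuousLinearMap.snd ℝ (Fin n → ℝ) (Fin n → ℝ))) : TE n →L[ℝ] ℝ) p :=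
  (((ContinuousLinearMap.proj a).comp
    (ContinuousLinearMap.snd ℝ (Fin n → ℝ) (Fin n → ℝ))) : TE n →L[ℝ] ℝ).hasFDerivAt

lemma diffAt_snd_apply (a : Fin n) (p : TE n) :
    DifferentiableAt ℝ (fun q : TE n => q.2 a) p :=
  (hasFDeriv_snd_apply a p).differentiableAt

lemma fderiv_snd_apply (a : Fin n) (p u : TE n) :
    fderiv ℝ (fun q : TE n => q.2 a) p u = u.2 a := by
  rw [(hasFDeriv_snd_apply a p).fderiv]; rfl

lemma fderiv_mul_apply2 {f h : TE n → ℝ} {p : TE n} (hf : DifferentiableAt ℝ f p)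
    (hh : DifferentiableAt ℝ h p) (u : TE n) :
    fderiv ℝ (fun q => f q * h q) p u = fderiv ℝ f p u * h p + f p * fderiv ℝ h p u := by
  rw [fderiv_fun_mul hf hh]
  simp only [ContinuousLinearMap.add_apply, ContinuousLinearMap.smul_apply, smul_eq_mul]
  ring

lemma fderiv_section_apply {F : TE n → ℝ} {x y : Fin n → ℝ}
    (hF : DifferentiableAt ℝ F (x, y)) (u : Fin n → ℝ) :
    fderiv ℝ (fun y' => F (x, y')) y u = fderiv ℝ F (x, y) (0, u) := by
  have h : HasFDerivAt (fun y' => F (x, y'))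
      ((fderiv ℝ F (x, y)).comp (ContinuousLinearMap.inr ℝ (Fin n → ℝ) (Fin n → ℝ))) y :=
    hF.hasFDerivAt.comp y (hasFDerivAt_prodMk_right x y)
  rw [h.fderiv]; rfl

end Aux2
section Aux3
variable {n : ℕ} {g : Base n → Fin n → Fin n → ℝ} {K : TE n → Fin n → Fin n → ℝ}

lemma diff_g_term (hg : ∀ a b, ContDiff ℝ (⊤ : ℕ∞) (fun x => g x a b)) (a b : Fin n) (p : TE n) :
    DifferentiableAt ℝ (fun q : TE n => g q.1 a b) p :=
  diffAt_comp_fst ((hg a b).differentiable (by simp)) p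

/-- Derivative of `q ↦ ∑ g_{ab}(q.1) q.2^a w^b`. -/
lemma keyD (hg : ∀ a b, ContDiff ℝ (⊤ : ℕ∞) (fun x => g x a b)) (w : Fin n → ℝ) (p u : TE n) :
    fderiv ℝ (fun q : TE n => ∑ a, ∑ b, g q.1 a b * q.2 a * w b) p u
      = ∑ a, ∑ b, (fderiv ℝ (fun x => g x a b) p.1 u.1 * p.2 a + g p.1 a b * u.2 a) * w b := by
  have hd : ∀ a b : Fin n, DifferentiableAt ℝ (fun q : TE n => g q.1 a b * q.2 a * w b) p :=
    fun a b => ((diff_g_term hg a b p).mul (diffAt_snd_apply a p)).mul_const _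
  rw [fderiv_fun_sum (fun a _ => DifferentiableAt.fun_sum fun b _ => hd a b)]
  rw [ContinuousLinearMap.sum_apply]
  refine Finset.sum_congr rfl fun a _ => ?_
  rw [fderiv_fun_sum (fun b _ => hd a b), ContinuousLinearMap.sum_apply]
  refine Finset.sum_congr rfl fun b _ => ?_
  rw [fderiv_mul_const ((diff_g_term hg a b p).fun_mul (diffAt_snd_apply a p)) (w b)]
  rw [ContinuousLinearMap.smul_apply, smul_eq_mul]
  rw [fderiv_mul_apply2 (diff_g_term hg a b p) (diffAt_snd_apply a p)]
  rw [fderiv_comp_fst_apply ((hg a b).differentiable (by simp)), fderiv_snd_apply]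
  ring

/-- The comparison quantity `Dg p u w = ∑ (∂g_{ab}(u.1) ẋ^a + g_{ab} u.2^a) w^b`. -/
noncomputable def Dg (g : Base n → Fin n → Fin n → ℝ) (p u : TE n) (w : Fin n → ℝ) : ℝ :=
  ∑ a, ∑ b, (fderiv ℝ (fun x => g x a b) p.1 u.1 * p.2 a + g p.1 a b * u.2 a) * w b

end Aux3
section Aux4
variable {n : ℕ} {g : Base n → Fin n → Fin n → ℝ} {K : TE n → Fin n → Fin n → ℝ}

lemma extd_gflat (hg : ∀ a b, ContDiff ℝ (⊤ : ℕ∞) (fun x => g x a b)) (p : TE n) (v : Fin 2 → TE n) :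
    extd (gflat g) p v = Dg g p (v 0) ((v 1).1) - Dg g p (v 1) ((v 0).1) := by
  have h0 : (fun q : TE n => gflat g q (v ∘ (0 : Fin 2).succAbove))
      = fun q : TE n => ∑ a, ∑ b, g q.1 a b * q.2 a * (v 1).1 b := rfl
  have h1 : (fun q : TE n => gflat g q (v ∘ (1 : Fin 2).succAbove))
      = fun q : TE n => ∑ a, ∑ b, g q.1 a b * q.2 a * (v 0).1 b := rfl
  show (∑ i : Fin 2, (-1 : ℝ) ^ (i : ℕ)
      * fderiv ℝ (fun q => gflat g q (v ∘ i.succAbove)) p (v i)) = _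
  rw [Fin.sum_univ_two, h0, h1, keyD hg, keyD hg]
  show (1 : ℝ) * _ + (-1 : ℝ) ^ (1 : ℕ) * _ = _
  rw [Dg, Dg]
  ring

lemma insK_gflat : insK (horK K) (gflat g) = gflat g := by
  funext q v
  show (∑ j : Fin 1, (-1 : ℝ) ^ (j : ℕ)
      * gflat g q (Fin.cons (horK K q (v j)) (v ∘ j.succAbove))) = _
  rw [Fin.sum_univ_one]
  show (1 : ℝ) * (∑ a, ∑ b, g q.1 a b * q.2 a * (v 0).1 b) = _
  rw [one_mul]; rfl

lemma lieK_eval (hg : ∀ a b, ContDiff ℝ (⊤ : ℕ∞) (fun x => g x a b)) (p : TE n) (v : Fin 2 → TE n) :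
    lieK (horK K) (gflat g) p v
      = Dg g p (horK K p (v 0)) ((v 1).1) - Dg g p (horK K p (v 1)) ((v 0).1) := by
  show insK (horK K) (extd (gflat g)) p v - extd (insK (horK K) (gflat g)) p v = _
  rw [insK_gflat]
  have hins : insK (horK K) (extd (gflat g)) p v
      = extd (gflat g) p (Fin.cons (horK K p (v 0)) (v ∘ (0:Fin 2).succAbove))
        - extd (gflat g) p (Fin.cons (horK K p (v 1)) (v ∘ (1:Fin 2).succAbove)) := by
    show (∑ j : Fin 2, (-1 : ℝ) ^ (j : ℕ)
        * extd (gflat g) p (Fin.cons (horK K p (v j)) (v ∘ j.succAbove))) = _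
    rw [Fin.sum_univ_two]
    norm_num
    ring
  rw [hins, extd_gflat hg, extd_gflat hg, extd_gflat hg]
  have c00 : (Fin.cons (horK K p (v 0)) (v ∘ (0:Fin 2).succAbove) : Fin 2 → TE n) 0
      = horK K p (v 0) := rfl
  have c01 : (Fin.cons (horK K p (v 0)) (v ∘ (0:Fin 2).succAbove) : Fin 2 → TE n) 1 = v 1 := rfl
  have c10 : (Fin.cons (horK K p (v 1)) (v ∘ (1:Fin 2).succAbove) : Fin 2 → TE n) 0
      = horK K p (v 1) := rfl
  have c11 : (Fin.cons (horK K p (v 1)) (v ∘ (1:Fin 2).succAbove) : Fin 2 → TE n) 1 = v 0 := rfl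
  rw [c00, c01, c10, c11]
  have hh0 : (horK K p (v 0)).1 = (v 0).1 := rfl
  have hh1 : (horK K p (v 1)).1 = (v 1).1 := rfl
  rw [hh0, hh1]
  ring

end Aux4
section Aux5
variable {n : ℕ} {g : Base n → Fin n → Fin n → ℝ} {K : TE n → Fin n → Fin n → ℝ}

/-- `Tf p u w = ∑ (∂g_{ab}(u.1) ẋ^a + g_{ab} K^a(u)) w^b`, the building block of `L[K]g♭`. -/
noncomputable def Tf (g : Base n → Fin n → Fin n → ℝ) (K : TE n → Fin n → Fin n → ℝ)
    (q u : TE n) (w : Fin n → ℝ) : ℝ :=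
  Dg g q (horK K q u) w

lemma Tf_fun (u : TE n) (w : Fin n → ℝ) :
    (fun q : TE n => Tf g K q u w)
      = fun q : TE n => ∑ a, ∑ b,
          (fderiv ℝ (fun x => g x a b) q.1 u.1 * q.2 a
            + g q.1 a b * (∑ c, u.1 c * K q c a)) * w b := rfl

section withhyp
variable (hg : ∀ a b, ContDiff ℝ (⊤ : ℕ∞) (fun x => g x a b))
    (hK : ∀ a b, ContDiff ℝ (⊤ : ℕ∞) (fun p => K p a b))

include hg in
lemma hFd (a b : Fin n) (u1 : Fin n → ℝ) :
    Differentiable ℝ (fun x : Base n => fderiv ℝ (fun y => g y a b) x u1) :=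
  (((hg a b).fderiv_right (m := 1) (by exact WithTop.coe_le_coe.mpr le_top)).clm_apply contDiff_const).differentiable (by simp)

include hg hK in
lemma diff_Tf_term (a b : Fin n) (u : TE n) (p : TE n) :
    DifferentiableAt ℝ (fun q : TE n =>
      (fderiv ℝ (fun x => g x a b) q.1 u.1 * q.2 a
        + g q.1 a b * (∑ c, u.1 c * K q c a))) p := by
  refine DifferentiableAt.add ?_ ?_
  · exact (diffAt_comp_fst (hFd hg a b u.1) p).mul (diffAt_snd_apply a p)
  · exact (diff_g_term hg a b p).mul
      (DifferentiableAt.fun_sum fun c _ => (((hK c a).differentiable (by simp)) p).const_mul _)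

include hg hK in
lemma diffAt_Tf (u : TE n) (w : Fin n → ℝ) (p : TE n) :
    DifferentiableAt ℝ (fun q : TE n => Tf g K q u w) p := by
  rw [Tf_fun]
  exact DifferentiableAt.fun_sum fun a _ => DifferentiableAt.fun_sum fun b _ =>
    (diff_Tf_term hg hK a b u p).mul_const _

include hg hK in
lemma fderiv_Tf (p u : TE n) (w : Fin n → ℝ) :
    fderiv ℝ (fun q => Tf g K q u w) p ((0 : Fin n → ℝ), p.2)
      = ∑ a, ∑ b, (fderiv ℝ (fun x => g x a b) p.1 u.1 * p.2 a
          + g p.1 a b * (∑ c, u.1 c * (∑ e, p.2 e * vdT (fun q => K q c a) e p))) * w b := by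
  rw [Tf_fun]
  rw [fderiv_fun_sum (fun a _ => DifferentiableAt.fun_sum fun b _ =>
    (diff_Tf_term hg hK a b u p).mul_const _), ContinuousLinearMap.sum_apply]
  refine Finset.sum_congr rfl fun a _ => ?_
  rw [fderiv_fun_sum (fun b _ => (diff_Tf_term hg hK a b u p).mul_const _),
    ContinuousLinearMap.sum_apply]
  refine Finset.sum_congr rfl fun b _ => ?_
  rw [fderiv_mul_const (diff_Tf_term hg hK a b u p) (w b),
    ContinuousLinearMap.smul_apply, smul_eq_mul]
  rw [fderiv_fun_add ((diffAt_comp_fst (hFd hg a b u.1) p).fun_mul (diffAt_snd_apply a p))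
    ((diff_g_term hg a b p).fun_mul
      (DifferentiableAt.fun_sum fun c _ => (((hK c a).differentiable (by simp)) p).const_mul _)),
    ContinuousLinearMap.add_apply]
  rw [fderiv_mul_apply2 (diffAt_comp_fst (hFd hg a b u.1) p) (diffAt_snd_apply a p)]
  rw [fderiv_comp_fst_apply (hFd hg a b u.1)]
  rw [fderiv_snd_apply]
  rw [fderiv_mul_apply2 (diff_g_term hg a b p)
    (DifferentiableAt.fun_sum fun c _ => (((hK c a).differentiable (by simp)) p).const_mul _)]
  rw [fderiv_comp_fst_apply ((hg a b).differentiable (by simp))]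
  rw [fderiv_fun_sum (fun c _ => (((hK c a).differentiable (by simp)) p).const_mul _),
    ContinuousLinearMap.sum_apply]
  have hdir1 : (((0 : Fin n → ℝ), p.2) : TE n).1 = 0 := rfl
  have hdir2 : (((0 : Fin n → ℝ), p.2) : TE n).2 = p.2 := rfl
  rw [hdir1, hdir2, map_zero, map_zero]
  have hKder : ∀ c : Fin n,
      fderiv ℝ (fun q => u.1 c * K q c a) p (((0 : Fin n → ℝ), p.2) : TE n)
        = u.1 c * (∑ e, p.2 e * vdT (fun q => K q c a) e p) := by
    intro c
    rw [fderiv_const_mul (((hK c a).differentiable (by simp)) p) (u.1 c),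
      ContinuousLinearMap.smul_apply, smul_eq_mul,
      fderiv_fiber_expand (fun q => K q c a) p p.2]
  rw [Finset.sum_congr rfl fun c _ => hKder c]
  ring
end withhyp
end Aux5
section Aux6
variable {n : ℕ} {g : Base n → Fin n → Fin n → ℝ} {K : TE n → Fin n → Fin n → ℝ}

/-- The coefficient function appearing in `L[I]L[K]g♭`. -/
noncomputable def Efin (g : Base n → Fin n → Fin n → ℝ) (K : TE n → Fin n → Fin n → ℝ)
    (p : TE n) (u w : Fin n → ℝ) : ℝ :=
  ∑ a, ∑ b, (fderiv ℝ (fun x => g x a b) p.1 u * p.2 a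
      + g p.1 a b * (∑ c, u c * (∑ e, p.2 e * vdT (fun q => K q c a) e p))) * w b

lemma Tf_zero_left (q : TE n) (y w : Fin n → ℝ) :
    Tf g K q (((0 : Fin n → ℝ), y) : TE n) w = 0 := by
  simp [Tf, Dg, horK]

lemma Tf_zero_right (q u : TE n) :
    Tf g K q u (0 : Fin n → ℝ) = 0 := by
  simp [Tf, Dg]

lemma liou_hasFDeriv (p : TE n) :
    HasFDerivAt (liou (n := n))
      (((ContinuousLinearMap.inr ℝ (Fin n → ℝ) (Fin n → ℝ)).comp
        (ContinuousLinearMap.snd ℝ (Fin n → ℝ) (Fin n → ℝ)))) p :=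
  (((ContinuousLinearMap.inr ℝ (Fin n → ℝ) (Fin n → ℝ)).comp
        (ContinuousLinearMap.snd ℝ (Fin n → ℝ) (Fin n → ℝ)))).hasFDerivAt

section withhyp2
variable (hg : ∀ a b, ContDiff ℝ (⊤ : ℕ∞) (fun x => g x a b))
    (hK : ∀ a b, ContDiff ℝ (⊤ : ℕ∞) (fun p => K p a b))

include hg hK in
lemma lieV_eval (p : TE n) (v : Fin 2 → TE n) :
    lieV liou (lieK (horK K) (gflat g)) p v
      = Efin g K p ((v 0).1) ((v 1).1) - Efin g K p ((v 1).1) ((v 0).1) := by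
  have hfn : (fun q => lieK (horK K) (gflat g) q v)
      = fun q => Tf g K q (v 0) ((v 1).1) - Tf g K q (v 1) ((v 0).1) :=
    funext fun q => lieK_eval hg q v
  show fderiv ℝ (fun q => lieK (horK K) (gflat g) q v) p (liou p)
      + (∑ i : Fin 2, lieK (horK K) (gflat g) p
          (Function.update v i (fderiv ℝ liou p (v i)))) = _
  rw [hfn]
  rw [fderiv_fun_sub (diffAt_Tf hg hK _ _ p) (diffAt_Tf hg hK _ _ p),
    ContinuousLinearMap.sub_apply]
  have hlp : liou (n := n) p = (((0 : Fin n → ℝ), p.2) : TE n) := rfl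
  rw [hlp, fderiv_Tf hg hK, fderiv_Tf hg hK]
  have hld : ∀ i : Fin 2, fderiv ℝ liou p (v i) = (((0 : Fin n → ℝ), (v i).2) : TE n) := by
    intro i; rw [(liou_hasFDeriv p).fderiv]; rfl
  rw [Fin.sum_univ_two, hld 0, hld 1]
  rw [lieK_eval hg, lieK_eval hg]
  rw [show (Function.update v 0 (((0 : Fin n → ℝ), (v 0).2) : TE n)) 0
      = (((0 : Fin n → ℝ), (v 0).2) : TE n) from Function.update_self _ _ _]
  rw [show (Function.update v 0 (((0 : Fin n → ℝ), (v 0).2) : TE n)) 1 = v 1 from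
      Function.update_of_ne (by decide) _ _]
  rw [show (Function.update v 1 (((0 : Fin n → ℝ), (v 1).2) : TE n)) 1
      = (((0 : Fin n → ℝ), (v 1).2) : TE n) from Function.update_self _ _ _]
  rw [show (Function.update v 1 (((0 : Fin n → ℝ), (v 1).2) : TE n)) 0 = v 0 from
      Function.update_of_ne (by decide) _ _]
  have e1 : Dg g p (horK K p (((0 : Fin n → ℝ), (v 0).2) : TE n)) ((v 1).1) = 0 :=
    Tf_zero_left p _ _
  have e2 : Dg g p (horK K p (v 1)) ((((0 : Fin n → ℝ), (v 0).2) : TE n).1) = 0 :=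
    Tf_zero_right p _
  have e3 : Dg g p (horK K p (v 0)) ((((0 : Fin n → ℝ), (v 1).2) : TE n).1) = 0 :=
    Tf_zero_right p _
  have e4 : Dg g p (horK K p (((0 : Fin n → ℝ), (v 1).2) : TE n)) ((v 0).1) = 0 :=
    Tf_zero_left p _ _
  rw [e1, e2, e3, e4]
  show Efin g K p ((v 0).1) ((v 1).1) - Efin g K p ((v 1).1) ((v 0).1) + (0 - 0 + (0 - 0)) = _
  ring
end withhyp2
end Aux6
section Aux7
variable {n : ℕ}

lemma nest3 (f : Fin n → Fin n → Fin n → ℝ) :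
    ∑ a, ∑ b, ∑ c, f a b c = ∑ x : Fin n × Fin n × Fin n, f x.1 x.2.1 x.2.2 := by
  rw [Fintype.sum_prod_type]
  refine Finset.sum_congr rfl fun a _ => ?_
  rw [Fintype.sum_prod_type]

lemma nest4 (f : Fin n → Fin n → Fin n → Fin n → ℝ) :
    ∑ a, ∑ b, ∑ c, ∑ e, f a b c e
      = ∑ x : Fin n × Fin n × Fin n × Fin n, f x.1 x.2.1 x.2.2.1 x.2.2.2 := by
  rw [Fintype.sum_prod_type]
  refine Finset.sum_congr rfl fun a _ => nest3 _

def perm3 : (Fin n × Fin n × Fin n) ≃ (Fin n × Fin n × Fin n) :=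
  ⟨fun x => (x.1, x.2.2, x.2.1), fun x => (x.1, x.2.2, x.2.1),
    fun ⟨_, _, _⟩ => rfl, fun ⟨_, _, _⟩ => rfl⟩

def perm4 : (Fin n × Fin n × Fin n × Fin n) ≃ (Fin n × Fin n × Fin n × Fin n) :=
  ⟨fun x => (x.2.2.2, x.2.2.1, x.2.1, x.1), fun x => (x.2.2.2, x.2.2.1, x.2.1, x.1),
    fun ⟨_, _, _, _⟩ => rfl, fun ⟨_, _, _, _⟩ => rfl⟩

variable {g : Base n → Fin n → Fin n → ℝ} {K : TE n → Fin n → Fin n → ℝ}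

/-- First block of the target formula, indices `x = (e, a, b)`. -/
noncomputable def SA (g : Base n → Fin n → Fin n → ℝ) (p : TE n) (u w : Fin n → ℝ) : ℝ :=
  ∑ x : Fin n × Fin n × Fin n,
    p.2 x.1 * pdB (fun y => g y x.1 x.2.2) x.2.1 p.1 * (u x.2.1 * w x.2.2)

/-- Second block of the target formula, indices `x = (e, a, b, s)`. -/
noncomputable def SB (g : Base n → Fin n → Fin n → ℝ) (K : TE n → Fin n → Fin n → ℝ)
    (p : TE n) (u w : Fin n → ℝ) : ℝ :=
  ∑ x : Fin n × Fin n × Fin n × Fin n,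
    g p.1 x.2.2.2 x.2.2.1 * vdT (fun q => K q x.2.1 x.2.2.2) x.1 p
      * (p.2 x.1 * (u x.2.1 * w x.2.2.1))

lemma Efin_eq (p : TE n) (u w : Fin n → ℝ) :
    Efin g K p u w = SA g p u w + SB g K p u w := by
  have step1 : Efin g K p u w
      = (∑ a, ∑ b, ∑ c, pdB (fun y => g y a b) c p.1 * u c * p.2 a * w b)
        + ∑ a, ∑ b, ∑ c, ∑ e,
            g p.1 a b * u c * p.2 e * vdT (fun q => K q c a) e p * w b := by
    rw [Efin, ← Finset.sum_add_distrib]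
    refine Finset.sum_congr rfl fun a _ => ?_
    rw [← Finset.sum_add_distrib]
    refine Finset.sum_congr rfl fun b _ => ?_
    rw [fderiv_base_expand]
    rw [add_mul, Finset.sum_mul, Finset.sum_mul]
    congr 1
    · exact Finset.sum_congr rfl fun c _ => by ring
    · rw [Finset.mul_sum, Finset.sum_mul]
      refine Finset.sum_congr rfl fun c _ => ?_
      rw [Finset.mul_sum, Finset.mul_sum, Finset.sum_mul]
      refine Finset.sum_congr rfl fun e _ => by ring
  rw [step1, nest3, nest4, SA, SB]
  congr 1
  · exact Fintype.sum_equiv perm3 _ _ fun ⟨a, b, c⟩ => by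
      show pdB (fun y => g y a b) c p.1 * u c * p.2 a * w b
        = p.2 a * pdB (fun y => g y a b) c p.1 * (u c * w b)
      ring
  · exact Fintype.sum_equiv perm4 _ _ fun ⟨a, b, c, e⟩ => by
      show g p.1 a b * u c * p.2 e * vdT (fun q => K q c a) e p * w b
        = g p.1 a b * vdT (fun q => K q c a) e p * (p.2 e * (u c * w b))
      ring

lemma RHS_eq (p : TE n) (u w : Fin n → ℝ) :
    (∑ e, ∑ a, ∑ b, p.2 e *
        (pdB (fun y => g y e b) a p.1
          + ∑ s, g p.1 s b * vdT (fun q => K q a s) e p) * (u a * w b - w a * u b))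
      = SA g p u w + SB g K p u w - (SA g p w u + SB g K p w u) := by
  have step1 : (∑ e, ∑ a, ∑ b, p.2 e *
        (pdB (fun y => g y e b) a p.1
          + ∑ s, g p.1 s b * vdT (fun q => K q a s) e p) * (u a * w b - w a * u b))
      = ((∑ e, ∑ a, ∑ b, p.2 e * pdB (fun y => g y e b) a p.1 * (u a * w b))
          + ∑ e, ∑ a, ∑ b, ∑ s,
              g p.1 s b * vdT (fun q => K q a s) e p * (p.2 e * (u a * w b)))
        - ((∑ e, ∑ a, ∑ b, p.2 e * pdB (fun y => g y e b) a p.1 * (w a * u b))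
          + ∑ e, ∑ a, ∑ b, ∑ s,
              g p.1 s b * vdT (fun q => K q a s) e p * (p.2 e * (w a * u b))) := by
    rw [← Finset.sum_add_distrib, ← Finset.sum_add_distrib, ← Finset.sum_sub_distrib]
    refine Finset.sum_congr rfl fun e _ => ?_
    rw [← Finset.sum_add_distrib, ← Finset.sum_add_distrib, ← Finset.sum_sub_distrib]
    refine Finset.sum_congr rfl fun a _ => ?_
    rw [← Finset.sum_add_distrib, ← Finset.sum_add_distrib, ← Finset.sum_sub_distrib]
    refine Finset.sum_congr rfl fun b _ => ?_
    have expand : ∀ z : ℝ,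
        (∑ s, g p.1 s b * vdT (fun q => K q a s) e p) * (p.2 e * z)
          = ∑ s, g p.1 s b * vdT (fun q => K q a s) e p * (p.2 e * z) :=
      fun z => Finset.sum_mul _ _ _
    rw [← expand, ← expand]
    ring
  rw [step1]
  congr 2
  · rw [nest3 (f := fun e a b => p.2 e * pdB (fun y => g y e b) a p.1 * (u a * w b)), SA]
  · rw [nest4 (f := fun e a b s =>
      g p.1 s b * vdT (fun q => K q a s) e p * (p.2 e * (u a * w b))), SB]
  · rw [nest3 (f := fun e a b => p.2 e * pdB (fun y => g y e b) a p.1 * (w a * u b)), SA]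
  · rw [nest4 (f := fun e a b s =>
      g p.1 s b * vdT (fun q => K q a s) e p * (p.2 e * (w a * u b))), SB]

lemma Efin_sub (p : TE n) (u w : Fin n → ℝ) :
    Efin g K p u w - Efin g K p w u
      = ∑ e, ∑ a, ∑ b, p.2 e *
          (pdB (fun y => g y e b) a p.1
            + ∑ s, g p.1 s b * vdT (fun q => K q a s) e p) * (u a * w b - w a * u b) := by
  rw [RHS_eq, Efin_eq, Efin_eq]
end Aux7
section Aux8
variable {n : ℕ}

lemma euler_const {f : (Fin n → ℝ) → ℝ} (hf : ContDiff ℝ (⊤ : ℕ∞) f)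
    (h : ∀ y, fderiv ℝ f y y = 0) (y d : Fin n → ℝ) :
    fderiv ℝ f y d = 0 := by
  have hconst : ∀ z : Fin n → ℝ, f z = f 0 := by
    intro z
    have hdiff : Differentiable ℝ (fun t : ℝ => f (t • z)) :=
      (hf.differentiable (by simp)).comp (differentiable_id.smul_const z)
    have hderiv : ∀ t : ℝ, deriv (fun s : ℝ => f (s • z)) t = fderiv ℝ f (t • z) z := by
      intro t
      have h1 : HasDerivAt (fun s : ℝ => s • z) z t := by
        simpa using (hasDerivAt_id t).smul_const z
      exact (((hf.differentiable (by simp)) _).hasFDerivAt.comp_hasDerivAt t h1).deriv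
    have hcont : Continuous fun t : ℝ => fderiv ℝ f (t • z) z := by
      have h2 : Continuous (fderiv ℝ f) := (hf.fderiv_right (m := 0) (by simp)).continuous
      exact (h2.comp (continuous_id.smul (continuous_const))).clm_apply continuous_const
    have hne : ∀ t : ℝ, t ≠ 0 → fderiv ℝ f (t • z) z = 0 := by
      intro t ht
      have h2 := h (t • z)
      rw [map_smul, smul_eq_mul] at h2
      exact (mul_eq_zero.mp h2).resolve_left ht
    have hzero : ∀ t : ℝ, deriv (fun s : ℝ => f (s • z)) t = 0 := by
      intro t
      rw [hderiv t]
      rcases eq_or_ne t 0 with rfl | ht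
      · have hlim : Filter.Tendsto (fun t : ℝ => fderiv ℝ f (t • z) z)
            (nhdsWithin 0 {(0:ℝ)}ᶜ) (nhds (fderiv ℝ f ((0:ℝ) • z) z)) :=
          (hcont.continuousAt).continuousWithinAt.tendsto
        have hlim0 : Filter.Tendsto (fun t : ℝ => fderiv ℝ f (t • z) z)
            (nhdsWithin 0 {(0:ℝ)}ᶜ) (nhds 0) := by
          refine Filter.Tendsto.congr' ?_ tendsto_const_nhds
          filter_upwards [self_mem_nhdsWithin] with t ht
          exact (hne t ht).symm
        simpa using tendsto_nhds_unique hlim hlim0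
      · exact hne t ht
    have := is_const_of_deriv_eq_zero hdiff hzero 1 0
    simpa using this
  have hf0 : f = fun _ => f 0 := funext hconst
  rw [hf0]
  simp

end Aux8
section Aux9
variable {n : ℕ} {g : Base n → Fin n → Fin n → ℝ} {K : TE n → Fin n → Fin n → ℝ}

/-- The coefficient `C_e{}_a{}_b = ∂_a g_{eb} + g_{sb} ∂̇_e K_a^s`. -/
noncomputable def Cc (g : Base n → Fin n → Fin n → ℝ) (K : TE n → Fin n → Fin n → ℝ)
    (q : TE n) (e a b : Fin n) : ℝ :=
  pdB (fun y => g y e b) a q.1 + ∑ s, g q.1 s b * vdT (fun q' => K q' a s) e q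

section hyp9
variable (hg : ∀ a b, ContDiff ℝ (⊤ : ℕ∞) (fun x => g x a b))
    (hK : ∀ a b, ContDiff ℝ (⊤ : ℕ∞) (fun p => K p a b))

include hg hK in
lemma lieV_formula (p : TE n) (v : Fin 2 → TE n) :
    lieV liou (lieK (horK K) (gflat g)) p v
      = ∑ e, ∑ a, ∑ b, p.2 e * Cc g K p e a b *
          ((v 0).1 a * (v 1).1 b - (v 1).1 a * (v 0).1 b) := by
  rw [lieV_eval hg hK, Efin_sub]
  rfl

include hg hK in
/-- Backward direction: the pointwise condition kills `L[I]L[K]g♭`. -/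
lemma pointwise_imp_zero
    (hpt : ∀ p (a b c : Fin n),
      pdB (fun y => g y a b) c p.1 + ∑ e, g p.1 e b * vdT (fun q => K q c e) a p
        - pdB (fun y => g y a c) b p.1
        - ∑ e, g p.1 e c * vdT (fun q => K q b e) a p = 0)
    (p : TE n) (v : Fin 2 → TE n) :
    lieV liou (lieK (horK K) (gflat g)) p v = 0 := by
  rw [lieV_formula hg hK]
  have hC : ∀ e a b : Fin n, Cc g K p e b a = Cc g K p e a b := by
    intro e a b
    have h := hpt p e b a
    rw [Cc, Cc]
    linarith
  simp only [mul_sub, Finset.sum_sub_distrib]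
  have hXY : (∑ e, ∑ a, ∑ b, p.2 e * Cc g K p e a b * ((v 1).1 a * (v 0).1 b))
      = ∑ e, ∑ a, ∑ b, p.2 e * Cc g K p e a b * ((v 0).1 a * (v 1).1 b) := by
    refine Finset.sum_congr rfl fun e _ => ?_
    rw [Finset.sum_comm]
    refine Finset.sum_congr rfl fun a _ => Finset.sum_congr rfl fun b _ => ?_
    rw [hC e a b]
    ring
  rw [hXY, sub_self]

lemma single_contract (A B : Fin n) (C : Fin n → Fin n → ℝ) :
    (∑ a, ∑ b, C a b *
        ((Pi.single A (1:ℝ) : Fin n → ℝ) a * (Pi.single B (1:ℝ) : Fin n → ℝ) b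
          - (Pi.single B (1:ℝ) : Fin n → ℝ) a * (Pi.single A (1:ℝ) : Fin n → ℝ) b))
      = C A B - C B A := by
  simp only [mul_sub, Finset.sum_sub_distrib, Pi.single_apply]
  congr 1
  · simp [Finset.sum_ite_eq', mul_ite, ite_mul]
  · simp [Finset.sum_ite_eq', mul_ite, ite_mul]

include hg hK in
lemma zero_imp_sym
    (hz : ∀ p (v : Fin 2 → TE n), lieV liou (lieK (horK K) (gflat g)) p v = 0)
    (q : TE n) (A B : Fin n) :
    ∑ e, q.2 e * (Cc g K q e A B - Cc g K q e B A) = 0 := by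
  have h := hz q ![((Pi.single A 1 : Fin n → ℝ), (0 : Fin n → ℝ)),
    ((Pi.single B 1 : Fin n → ℝ), (0 : Fin n → ℝ))]
  rw [lieV_formula hg hK] at h
  simp only [Matrix.cons_val_zero, Matrix.cons_val_one, Matrix.head_cons] at h
  rw [← h]
  refine Finset.sum_congr rfl fun e _ => ?_
  have := single_contract A B (fun a b => q.2 e * Cc g K q e a b)
  rw [this]
  ring
end hyp9
end Aux9
section Aux10
variable {n : ℕ} {g : Base n → Fin n → Fin n → ℝ} {K : TE n → Fin n → Fin n → ℝ}

lemma hasFDeriv_pi_apply (e : Fin n) (y : Fin n → ℝ) :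
    HasFDerivAt (fun y : Fin n → ℝ => y e)
      ((ContinuousLinearMap.proj e : (Fin n → ℝ) →L[ℝ] ℝ)) y :=
  (ContinuousLinearMap.proj e : (Fin n → ℝ) →L[ℝ] ℝ).hasFDerivAt

lemma fderiv_pi_apply (e : Fin n) (y d : Fin n → ℝ) :
    fderiv ℝ (fun y : Fin n → ℝ => y e) y d = d e := by
  rw [(hasFDeriv_pi_apply e y).fderiv]; rfl

section hyp10
variable (hg : ∀ a b, ContDiff ℝ (⊤ : ℕ∞) (fun x => g x a b))
    (hK : ∀ a b, ContDiff ℝ (⊤ : ℕ∞) (fun p => K p a b))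

include hK in
lemma sym_imp_pointwise
    (hsym : ∀ (q : TE n) (A B : Fin n), ∑ e, q.2 e * (Cc g K q e A B - Cc g K q e B A) = 0)
    (p : TE n) (a b c : Fin n) :
    pdB (fun y => g y a b) c p.1 + ∑ e, g p.1 e b * vdT (fun q => K q c e) a p
      - pdB (fun y => g y a c) b p.1
      - ∑ e, g p.1 e c * vdT (fun q => K q b e) a p = 0 := by
  set f : (Fin n → ℝ) → ℝ := fun y =>
    (∑ e, y e * (pdB (fun t => g t e b) c p.1 - pdB (fun t => g t e c) b p.1))
      + ∑ s, (g p.1 s b * K (p.1, y) c s - g p.1 s c * K (p.1, y) b s) with hf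
  have hsecdiff : ∀ (c' s : Fin n) (y : Fin n → ℝ),
      DifferentiableAt ℝ (fun y' => K (p.1, y') c' s) y := fun c' s y =>
    (((hK c' s).differentiable (by simp)) (p.1, y)).comp y
      ((differentiableAt_const p.1).prodMk differentiableAt_id)
  have hd1 : ∀ (y : Fin n → ℝ), DifferentiableAt ℝ (fun y' : Fin n → ℝ =>
      ∑ e, y' e * (pdB (fun t => g t e b) c p.1 - pdB (fun t => g t e c) b p.1)) y :=
    fun y => DifferentiableAt.fun_sum fun e _ =>
      ((hasFDeriv_pi_apply e y).differentiableAt).mul_const _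
  have hd2 : ∀ (y : Fin n → ℝ), DifferentiableAt ℝ (fun y' : Fin n → ℝ =>
      ∑ s, (g p.1 s b * K (p.1, y') c s - g p.1 s c * K (p.1, y') b s)) y :=
    fun y => DifferentiableAt.fun_sum fun s _ =>
      ((hsecdiff c s y).const_mul _).sub ((hsecdiff b s y).const_mul _)
  have hfder : ∀ (y d : Fin n → ℝ), fderiv ℝ f y d
      = (∑ e, d e * (pdB (fun t => g t e b) c p.1 - pdB (fun t => g t e c) b p.1))
        + ∑ s, (g p.1 s b * fderiv ℝ (fun q => K q c s) (p.1, y) ((0 : Fin n → ℝ), d)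
            - g p.1 s c * fderiv ℝ (fun q => K q b s) (p.1, y) ((0 : Fin n → ℝ), d)) := by
    intro y d
    rw [hf, fderiv_fun_add (hd1 y) (hd2 y), ContinuousLinearMap.add_apply]
    congr 1
    · rw [fderiv_fun_sum (fun e _ => ((hasFDeriv_pi_apply e y).differentiableAt).mul_const _),
        ContinuousLinearMap.sum_apply]
      refine Finset.sum_congr rfl fun e _ => ?_
      rw [fderiv_mul_const ((hasFDeriv_pi_apply e y).differentiableAt) _,
        ContinuousLinearMap.smul_apply, smul_eq_mul, fderiv_pi_apply]
      ring
    · rw [fderiv_fun_sum (fun s _ =>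
        ((hsecdiff c s y).const_mul _).fun_sub ((hsecdiff b s y).const_mul _)),
        ContinuousLinearMap.sum_apply]
      refine Finset.sum_congr rfl fun s _ => ?_
      rw [fderiv_fun_sub ((hsecdiff c s y).const_mul _) ((hsecdiff b s y).const_mul _),
        ContinuousLinearMap.sub_apply,
        fderiv_const_mul (hsecdiff c s y) _, fderiv_const_mul (hsecdiff b s y) _,
        ContinuousLinearMap.smul_apply, ContinuousLinearMap.smul_apply,
        smul_eq_mul, smul_eq_mul,
        fderiv_section_apply (F := fun q => K q c s)
          (((hK c s).differentiable (by simp)) (p.1, y)),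
        fderiv_section_apply (F := fun q => K q b s)
          (((hK b s).differentiable (by simp)) (p.1, y))]
  have hsmooth : ContDiff ℝ (⊤ : ℕ∞) f := by
    rw [hf]
    apply ContDiff.add
    · exact ContDiff.sum fun e _ => ((contDiff_pi.mp contDiff_id) e).mul contDiff_const
    · exact ContDiff.sum fun s _ =>
        (contDiff_const.mul ((hK c s).comp (contDiff_const.prodMk contDiff_id))).sub
          (contDiff_const.mul ((hK b s).comp (contDiff_const.prodMk contDiff_id)))
  have hzero : ∀ y : Fin n → ℝ, fderiv ℝ f y y = 0 := by
    intro y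
    rw [hfder y y]
    have hfib : ∀ (c' s : Fin n),
        fderiv ℝ (fun q => K q c' s) (p.1, y) ((0 : Fin n → ℝ), y)
          = ∑ e, y e * vdT (fun q => K q c' s) e (p.1, y) := fun c' s =>
      fderiv_fiber_expand _ _ _
    have hstep : (∑ s, (g p.1 s b * fderiv ℝ (fun q => K q c s) (p.1, y) ((0 : Fin n → ℝ), y)
            - g p.1 s c * fderiv ℝ (fun q => K q b s) (p.1, y) ((0 : Fin n → ℝ), y)))
        = ∑ e, y e * ((∑ s, g p.1 s b * vdT (fun q => K q c s) e (p.1, y))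
            - ∑ s, g p.1 s c * vdT (fun q => K q b s) e (p.1, y)) := by
      rw [Finset.sum_congr rfl fun s _ => by rw [hfib c s, hfib b s]]
      simp only [Finset.mul_sum]
      rw [Finset.sum_sub_distrib, Finset.sum_comm, Finset.sum_comm
        (f := fun s e => g p.1 s c * (y e * vdT (fun q => K q b s) e (p.1, y))),
        ← Finset.sum_sub_distrib]
      refine Finset.sum_congr rfl fun e _ => ?_
      rw [mul_sub, Finset.mul_sum, Finset.mul_sum]
      congr 1 <;> exact Finset.sum_congr rfl fun s _ => by ring
    rw [hstep, ← Finset.sum_add_distrib]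
    have hs := hsym (p.1, y) c b
    rw [← hs]
    refine Finset.sum_congr rfl fun e _ => ?_
    rw [Cc, Cc]
    dsimp only
    ring
  have hfin := euler_const hsmooth hzero p.2 (Pi.single a 1)
  rw [hfder p.2 (Pi.single a 1)] at hfin
  have h1 : (∑ e, (Pi.single a (1:ℝ) : Fin n → ℝ) e *
      (pdB (fun t => g t e b) c p.1 - pdB (fun t => g t e c) b p.1))
      = pdB (fun t => g t a b) c p.1 - pdB (fun t => g t a c) b p.1 := by
    simp [Pi.single_apply, Finset.sum_ite_eq', ite_mul]
  rw [h1] at hfin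
  have hvd : ∀ (c' s : Fin n),
      fderiv ℝ (fun q => K q c' s) (p.1, p.2) ((0 : Fin n → ℝ), Pi.single a 1)
        = vdT (fun q => K q c' s) a p := by
    intro c' s
    rw [Prod.mk.eta]
    rfl
  rw [Finset.sum_congr rfl fun s _ => by rw [hvd c s, hvd b s]] at hfin
  rw [Finset.sum_sub_distrib] at hfin
  linarith
end hyp10
end Aux10
/-- Let `K` be a connection on `TE → E`, `g` a pseudo-Riemannian
metric, `I = ẋ^a ∂̇_a` the Liouville vector field on `TE`, and `g♭ = g_{ab} ẋ^a d^b`.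
Then `L[I] L[K] g♭ = ẋ^e (∂_a g_{eb} + g_{sb} ∂̇_e K_a^s) d^a ∧ d^b`; hence
`L[I] L[K] g♭ = 0` if and only if
`∂_c g_{ab} + g_{eb} ∂̇_a K_c^e − ∂_b g_{ac} − g_{ec} ∂̇_a K_b^e = 0` for all indices. -/
theorem stmt10 (n : ℕ) (g : Base n → Fin n → Fin n → ℝ)
    (K : TE n → Fin n → Fin n → ℝ)
    (hg : ∀ a b, ContDiff ℝ (⊤ : ℕ∞) (fun x => g x a b))
    (hgsym : ∀ x a b, g x a b = g x b a)
    (hK : ∀ a b, ContDiff ℝ (⊤ : ℕ∞) (fun p => K p a b)) :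
    (∀ p (v : Fin 2 → TE n),
        lieV liou (lieK (horK K) (gflat g)) p v
          = ∑ e, ∑ a, ∑ b, p.2 e *
              (pdB (fun y => g y e b) a p.1
                + ∑ s, g p.1 s b * vdT (fun q => K q a s) e p) *
              ((v 0).1 a * (v 1).1 b - (v 1).1 a * (v 0).1 b))
    ∧ ((∀ p (v : Fin 2 → TE n), lieV liou (lieK (horK K) (gflat g)) p v = 0)
        ↔ (∀ p (a b c : Fin n),
            pdB (fun y => g y a b) c p.1 + ∑ e, g p.1 e b * vdT (fun q => K q c e) a p
              - pdB (fun y => g y a c) b p.1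
              - ∑ e, g p.1 e c * vdT (fun q => K q b e) a p = 0)) := by
  refine ⟨fun p v => by rw [lieV_eval hg hK p v, Efin_sub], ?_, ?_⟩
  · intro hz p a b c
    exact sym_imp_pointwise hK (zero_imp_sym hg hK hz) p a b c
  · intro hpt p v
    exact pointwise_imp_zero hg hK hpt p v
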